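/- Let G be a very well-covered graph on 2d vertices with no isolated vertices whose vertices admit a labelling {x_1,…,x_d,y_1,…,y_d} with {x_i,y_i} ∈ E(G) for all i. Then the independence complex of Δ = Ind(G) is strongly-connected: for any two maximal independent sets F, F' of G there is a sequence of maximal independent sets F = G_0, G_1, …, G_t = F' with |G_i ∩ G_{i+1}| = d − 1 for all i, provided additionally the Crupi–Rinaldo–Terai conditions (3)–(5) hold on the labelling. -/

import Mathlib

/-- `W` is an independent set of the graph `G`: no edge is contained in `W`. -/
def IsIndep {V : Type*} (G : SimpleGraph V) (W : Finset V) : Prop :=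
  ∀ u ∈ W, ∀ v ∈ W, ¬ G.Adj u v

/-- `W` is a maximal independent set of `G`. -/
def MaxIndep {V : Type*} (G : SimpleGraph V) (W : Finset V) : Prop :=
  IsIndep G W ∧ ∀ W', IsIndep G W' → W ⊆ W' → W = W'

/-- `Y` is a vertex cover of the graph `G`: every edge meets `Y`. -/
def IsVertexCover {V : Type*} (G : SimpleGraph V) (Y : Finset V) : Prop :=
  ∀ u v, G.Adj u v → u ∈ Y ∨ v ∈ Y

/-- `F` and `F'` are connected by a chain of maximal independent sets with
consecutive intersections of cardinality `d - 1`. -/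
def Conn {V : Type*} [DecidableEq V] (G : SimpleGraph V) (d : ℕ) (F F' : Finset V) : Prop :=
  ∃ t : ℕ, ∃ c : ℕ → Finset V, c 0 = F ∧ c t = F' ∧ (∀ i ≤ t, MaxIndep G (c i)) ∧
    ∀ i < t, ((c i) ∩ (c (i + 1))).card + 1 = d

theorem conn_refl {V : Type*} [DecidableEq V] {G : SimpleGraph V} {d : ℕ} {F : Finset V}
    (h : MaxIndep G F) : Conn G d F F :=
  ⟨0, fun _ => F, rfl, rfl, fun _ _ => h, fun i hi => absurd hi (Nat.not_lt_zero i)⟩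

theorem conn_symm {V : Type*} [DecidableEq V] {G : SimpleGraph V} {d : ℕ} {F F' : Finset V}
    (h : Conn G d F F') : Conn G d F' F := by
  obtain ⟨t, c, h0, ht, hm, hi⟩ := h
  refine ⟨t, fun k => c (t - k), by simpa using ht, by simpa using h0, fun i hit => hm _ (Nat.sub_le _ _), ?_⟩
  intro i hit
  have h1 : t - i = (t - (i + 1)) + 1 := by omega
  simp only
  rw [h1, Finset.inter_comm]
  exact hi _ (by omega)

theorem conn_trans {V : Type*} [DecidableEq V] {G : SimpleGraph V} {d : ℕ} {F M F' : Finset V}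
    (h : Conn G d F M) (h' : Conn G d M F') : Conn G d F F' := by
  obtain ⟨t1, c1, h10, h1t, h1m, h1i⟩ := h
  obtain ⟨t2, c2, h20, h2t, h2m, h2i⟩ := h'
  refine ⟨t1 + t2, fun k => if k < t1 then c1 k else c2 (k - t1), ?_, ?_, ?_, ?_⟩
  · by_cases h0 : 0 < t1
    · simpa [h0] using h10
    · have ht1 : t1 = 0 := by omega
      subst ht1
      show (if (0:ℕ) < 0 then c1 0 else c2 (0 - 0)) = F
      rw [if_neg (lt_irrefl 0)]
      rw [show (0:ℕ) - 0 = 0 from rfl, h20, ← h1t, h10]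
  · have : ¬ (t1 + t2 < t1) := by omega
    simp only [this, if_false]
    simpa using h2t
  · intro i hit
    by_cases hi : i < t1
    · simpa [hi] using h1m i (le_of_lt hi)
    · simp only [hi, if_false]
      exact h2m _ (by omega)
  · intro i hit
    by_cases hi : i < t1
    · have hc : (if i + 1 < t1 then c1 (i + 1) else c2 (i + 1 - t1)) = c1 (i + 1) := by
        by_cases hi1 : i + 1 < t1
        · simp [hi1]
        · have : i + 1 = t1 := by omega
          simp only [hi1, if_false, this, Nat.sub_self]
          rw [h20, ← h1t, if_neg (lt_irrefl t1)]
      simp only [hi, if_true, hc]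
      exact h1i i hi
    · have hi1 : ¬ (i + 1 < t1) := by omega
      simp only [hi, hi1, if_false]
      have he : i + 1 - t1 = (i - t1) + 1 := by omega
      rw [he]
      exact h2i _ (by omega)

theorem exists_maxIndep_superset {V : Type*} [Fintype V] [DecidableEq V] (G : SimpleGraph V)
    (W : Finset V) (hW : IsIndep G W) : ∃ M, W ⊆ M ∧ MaxIndep G M := by
  classical
  have hfin : ({M : Finset V | IsIndep G M ∧ W ⊆ M}).Finite := Set.toFinite _
  obtain ⟨M, hM, hmax⟩ := Set.Finite.exists_maximalFor Finset.card _ hfin ⟨W, hW, le_refl _⟩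
  refine ⟨M, hM.2, hM.1, fun W' hW' hsub => ?_⟩
  have : M.card = W'.card := le_antisymm (Finset.card_le_card hsub)
    (hmax ⟨hW', hM.2.trans hsub⟩ (Finset.card_le_card hsub))
  exact Finset.eq_of_subset_of_card_le hsub (le_of_eq this.symm)

/-- Let `G` be a very well-covered graph on `2d` vertices with no isolated
vertices whose labelling `{x_1,…,x_d,y_1,…,y_d}` satisfies the
Crupi–Rinaldo–Terai conditions (1)–(5).  Then the independence complex of `G`
is strongly-connected: any two maximal independent sets `F, F'` are joined by a
sequence of maximal independent sets with consecutive intersections of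
cardinality `d - 1`.  Here `Sum.inl i = x_i` and `Sum.inr i = y_i`. -/
theorem stmt_17 {d : ℕ} (G : SimpleGraph (Fin d ⊕ Fin d))
    (hiso : ∀ v, ∃ u, G.Adj v u)
    (hvwc : ∀ W : Finset (Fin d ⊕ Fin d), MaxIndep G W → W.card = d)
    -- (1) {x_1,…,x_d} is a minimal vertex cover and {y_1,…,y_d} a maximal independent set
    (h1a : IsVertexCover G (Finset.univ.image Sum.inl) ∧
      ∀ Y, IsVertexCover G Y → Y ⊆ Finset.univ.image Sum.inl →
        Y = Finset.univ.image Sum.inl)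
    (h1b : MaxIndep G (Finset.univ.image Sum.inr))
    -- (2) each {x_i, y_i} is an edge
    (h2 : ∀ i : Fin d, G.Adj (Sum.inl i) (Sum.inr i))
    -- (3) if {z_i,x_j} and {y_j,x_k} are edges for distinct i,j,k then {z_i,x_k} is an edge
    (h3 : ∀ i j k : Fin d, i ≠ j → j ≠ k → i ≠ k →
      ∀ z ∈ ({Sum.inl i, Sum.inr i} : Finset (Fin d ⊕ Fin d)),
        G.Adj z (Sum.inl j) → G.Adj (Sum.inr j) (Sum.inl k) → G.Adj z (Sum.inl k))
    -- (4) {x_i,y_j} an edge implies {x_i,x_j} is not an edge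
    (h4 : ∀ i j : Fin d, G.Adj (Sum.inl i) (Sum.inr j) → ¬ G.Adj (Sum.inl i) (Sum.inl j))
    -- (5) {x_i,y_j} an edge implies i ≤ j
    (h5 : ∀ i j : Fin d, G.Adj (Sum.inl i) (Sum.inr j) → i ≤ j)
    (F F' : Finset (Fin d ⊕ Fin d)) (hF : MaxIndep G F) (hF' : MaxIndep G F') :
    ∃ t : ℕ, ∃ c : Fin (t + 1) → Finset (Fin d ⊕ Fin d),
      c 0 = F ∧ c (Fin.last t) = F' ∧ (∀ i, MaxIndep G (c i)) ∧
      ∀ i : Fin t, ((c i.castSucc) ∩ (c i.succ)).card + 1 = d := by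
  classical
  set Y : Finset (Fin d ⊕ Fin d) := Finset.univ.image Sum.inr with hYdef
  have hB : ∀ W : Finset (Fin d ⊕ Fin d), IsIndep G W → W.card = d → MaxIndep G W := by
    intro W hW hc
    obtain ⟨M, hsub, hM⟩ := exists_maxIndep_superset G W hW
    have hWM : W = M := Finset.eq_of_subset_of_card_le hsub (by rw [hvwc M hM, hc])
    rwa [hWM]
  have key : ∀ n : ℕ, ∀ F : Finset (Fin d ⊕ Fin d), MaxIndep G F →
      (F.filter (fun z => z.isLeft)).card = n → Conn G d F Y := by
    intro n
    induction n using Nat.strong_induction_on with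
    | _ n ih =>
      intro F hFm hn
      by_cases hn0 : n = 0
      · subst hn0
        have hsub : F ⊆ Y := by
          intro z hz
          cases z with
          | inl i =>
            exfalso
            have hmem : Sum.inl i ∈ F.filter (fun z => z.isLeft) :=
              Finset.mem_filter.2 ⟨hz, rfl⟩
            rw [Finset.card_eq_zero] at hn
            simp [hn] at hmem
          | inr i => exact Finset.mem_image.2 ⟨i, Finset.mem_univ i, rfl⟩
        have hFY : F = Y := Finset.eq_of_subset_of_card_le hsub
          (by rw [hvwc F hFm, hvwc Y h1b])
        rw [hFY]; exact conn_refl h1b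
      · obtain ⟨z, hz⟩ : (F.filter (fun z => z.isLeft)).Nonempty := by
          rw [← Finset.card_pos, hn]; omega
        obtain ⟨hzF, hzl⟩ := Finset.mem_filter.1 hz
        obtain ⟨i0, rfl⟩ := Sum.isLeft_iff.1 hzl
        set S : Finset (Fin d) := Finset.univ.filter (fun i => Sum.inl i ∈ F) with hSdef
        have hS : S.Nonempty := ⟨i0, Finset.mem_filter.2 ⟨Finset.mem_univ i0, hzF⟩⟩
        set i : Fin d := S.min' hS with hidef
        have hiF : Sum.inl i ∈ F := (Finset.mem_filter.1 (S.min'_mem hS)).2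
        have hinrF : Sum.inr i ∉ F := fun h => hFm.1 _ hiF _ h (h2 i)
        set F2 : Finset (Fin d ⊕ Fin d) := insert (Sum.inr i) (F.erase (Sum.inl i))
          with hF2def
        have hkey : ∀ z ∈ F.erase (Sum.inl i), ¬ G.Adj (Sum.inr i) z := by
          intro z hz2 hadj
          obtain ⟨hne', hzF'⟩ := Finset.mem_erase.1 hz2
          cases z with
          | inl j =>
            have hji : j ≤ i := h5 j i hadj.symm
            have hij : i ≤ j :=
              Finset.min'_le S j (Finset.mem_filter.2 ⟨Finset.mem_univ j, hzF'⟩)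
            exact hne' (by rw [le_antisymm hji hij])
          | inr j =>
            exact h1b.1 _ (Finset.mem_image.2 ⟨i, Finset.mem_univ i, rfl⟩) _
              (Finset.mem_image.2 ⟨j, Finset.mem_univ j, rfl⟩) hadj
        have hF2ind : IsIndep G F2 := by
          intro u hu v hv
          rcases Finset.mem_insert.1 hu with rfl | hu' <;>
            rcases Finset.mem_insert.1 hv with rfl | hv'
          · exact G.irrefl
          · exact hkey v hv'
          · exact fun hadj => hkey u hu' hadj.symm
          · exact hFm.1 u (Finset.mem_of_mem_erase hu') v (Finset.mem_of_mem_erase hv')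
        have hdpos : 0 < d := i.pos
        have hF2card : F2.card = d := by
          rw [hF2def, Finset.card_insert_of_notMem
              (fun h => hinrF (Finset.mem_of_mem_erase h)),
            Finset.card_erase_of_mem hiF, hvwc F hFm]
          omega
        have hF2m : MaxIndep G F2 := hB F2 hF2ind hF2card
        have hfilt : F2.filter (fun z => z.isLeft) =
            (F.filter (fun z => z.isLeft)).erase (Sum.inl i) := by
          rw [hF2def, Finset.filter_insert, Finset.filter_erase]
          simp
        have hn' : (F2.filter (fun z => z.isLeft)).card = n - 1 := by
          have hmemf : Sum.inl i ∈ F.filter (fun z => z.isLeft) :=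
            Finset.mem_filter.2 ⟨hiF, rfl⟩
          rw [hfilt, Finset.card_erase_of_mem hmemf, hn]
        have hconn2 : Conn G d F2 Y := ih (n - 1) (by omega) F2 hF2m hn'
        have hstep : Conn G d F F2 := by
          refine ⟨1, fun k => if k = 0 then F else F2, by simp, by simp, ?_, ?_⟩
          · intro k hk
            by_cases h : k = 0 <;> simp [h, hFm, hF2m]
          · intro k hk
            have hk0 : k = 0 := by omega
            subst hk0
            have hint : F ∩ F2 = F.erase (Sum.inl i) := by
              ext w
              simp only [hF2def, Finset.mem_inter, Finset.mem_insert, Finset.mem_erase]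
              constructor
              · rintro ⟨hwF, rfl | ⟨hne', _⟩⟩
                · exact absurd hwF hinrF
                · exact ⟨hne', hwF⟩
              · rintro ⟨hne', hwF⟩
                exact ⟨hwF, Or.inr ⟨hne', hwF⟩⟩
            show ((if (0:ℕ) = 0 then F else F2) ∩ (if (0+1:ℕ) = 0 then F else F2)).card + 1 = d
            rw [if_pos rfl, if_neg (by omega), hint, Finset.card_erase_of_mem hiF,
              hvwc F hFm]
            omega
        exact conn_trans hstep hconn2
  have hconn : Conn G d F F' :=
    conn_trans (key _ F hF rfl) (conn_symm (key _ F' hF' rfl))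
  obtain ⟨t, c, h0, ht, hm, hi⟩ := hconn
  refine ⟨t, fun k => c k.val, by simpa using h0, by simpa using ht,
    fun k => hm k.val (Nat.lt_succ_iff.1 k.isLt), ?_⟩
  intro k
  simpa using hi k.val k.isLt
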